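/- If φ : PC(V) → W is a valuation, then the map φ' defined on cone indicators by φ'([C]) = (-1)^{dim C} φ([relint C]) extends to a valuation on PC(V). -/

import Mathlib

open scoped RealInnerProductSpace
open scoped Classical

noncomputable section

variable {V : Type*} [NormedAddCommGroup V] [InnerProductSpace ℝ V] [FiniteDimensional ℝ V]

/-- A polyhedral cone: a finite intersection of closed halfspaces through the origin. -/
def IsPolyCone (C : Set V) : Prop :=
  ∃ s : Finset V, C = ⋂ y ∈ s, {v : V | 0 ≤ ⟪v, y⟫}

/-- `F` is a face of the cone `C`: `F = C ∩ H_y` for some `y` (possibly `0`) with `C ⊆ H_y⁺`. -/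
def IsFaceOf (F C : Set V) : Prop :=
  ∃ y : V, C ⊆ {v : V | 0 ≤ ⟪v, y⟫} ∧ F = C ∩ {v : V | ⟪v, y⟫ = 0}

/-- Dimension of a set: the dimension of its linear span. -/
def sdim (S : Set V) : ℕ := Module.finrank ℝ (Submodule.span ℝ S)

/-- Dual cone. -/
def dualCone (C : Set V) : Set V := {v : V | ∀ c ∈ C, 0 ≤ ⟪v, c⟫}

/-- Angle cone `A(F, C) = { a • (x - z) : a > 0, x ∈ C, z ∈ relint F }`. -/
def angleCone (F C : Set V) : Set V :=
  {w : V | ∃ a : ℝ, 0 < a ∧ ∃ x ∈ C, ∃ z ∈ intrinsicInterior ℝ F, w = a • (x - z)}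

/-- Real-valued indicator function of a set. -/
def ind (S : Set V) : V → ℝ := S.indicator 1

/-- The `Γ` function: `Γ(C, x, y) = Σ_{F face of C} (-1)^(dim F) [A(F,C)](x) [F*](y)`. -/
def Γ (C : Set V) (x y : V) : ℝ :=
  ∑ᶠ F ∈ {F : Set V | IsFaceOf F C},
    (-1 : ℝ) ^ sdim F * ind (angleCone F C) x * ind (dualCone F) y

/-- `F₀` is the minimal face of `C`. -/
def IsMinimalFace (F₀ C : Set V) : Prop :=
  IsFaceOf F₀ C ∧ ∀ F : Set V, IsFaceOf F C → F₀ ⊆ F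

/-- A polyhedron: a finite intersection of translates of halfspaces. -/
def IsPolyhedron (P : Set V) : Prop :=
  ∃ s : Finset (V × ℝ), P = ⋂ p ∈ s, {v : V | p.2 ≤ ⟪v, p.1⟫}

/-!
Evaluate everything at a point `x`. Near `x` a polyhedral cone `C` looks like `x + T_x C`, where
`T_x C` is its tangent cone, so a linear relation `∑ aᵢ [Cᵢ] = 0` localizes to
`∑ aᵢ [x ∈ Cᵢ] [T_x Cᵢ] = 0`. The Euler characteristic with compact supports `χ` is a valuation
on polyhedra, and on a cone `K` it equals `(-1) ^ dim K` if `K` is a linear subspace and `0`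
otherwise. The tangent cone `T_x C` is a subspace exactly when `x ∈ relint C`, and it spans the same
space as `C`; hence `χ (T_x C) = (-1) ^ dim C [relint C] (x)`. Applying `χ` to the localized
relation gives `∑ aᵢ (-1) ^ dim Cᵢ [relint Cᵢ] = 0`, so `[C] ↦ (-1) ^ dim C [relint C]` is well
defined on `PC(V)`; composing it with `φ` gives the valuation.

In coordinates `χ` is the iterate, over the first coordinate, of the one-dimensional `χ` (the sum of
the right jumps of a function minus its value at `-∞`). Fourier–Motzkin elimination shows that the
projection of a polyhedron to a coordinate axis is a closed interval, unbounded exactly in the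
directions of its recession cone, which makes the induction on the dimension go through.
-/

open Filter Set Function Topology Matrix

lemma ind_apply {α : Type*} (S : Set α) (x : α) : ind S x = if x ∈ S then 1 else 0 := by
  simp [ind, Set.indicator_apply]

lemma ind_univ {α : Type*} : ind (univ : Set α) = 1 := by
  ext; simp [ind_apply]

lemma ind_congr {α β : Type*} {S : Set α} {T : Set β} {x : α} {y : β} (h : x ∈ S ↔ y ∈ T) :
    ind S x = ind T y := by
  simp only [ind_apply, h]

/-! ### The Euler characteristic on the line -/

def jump (g : ℝ → ℝ) (t : ℝ) : ℝ := g t - rightLim g t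

/-- The class of functions on which `eulerCharOne` is linear. -/
structure IsTame (g : ℝ → ℝ) : Prop where
  tendsto_nhdsGT : ∀ t, ∃ c, Tendsto g (𝓝[>] t) (𝓝 c)
  tendsto_atBot : ∃ c, Tendsto g atBot (𝓝 c)
  finite_support_jump : (support (jump g)).Finite

/-- The Euler characteristic with compact supports on `ℝ`: it is `1` on compact intervals, `0` on
closed half-lines and `-1` on `ℝ`. -/
def eulerCharOne (g : ℝ → ℝ) : ℝ := (∑ᶠ t, jump g t) - limUnder atBot g

namespace IsTame

variable {f g : ℝ → ℝ}

lemma jump_add (hf : IsTame f) (hg : IsTame g) :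
    jump (fun s => f s + g s) = fun t => jump f t + jump g t := by
  ext t
  obtain ⟨a, ha⟩ := hf.tendsto_nhdsGT t
  obtain ⟨b, hb⟩ := hg.tendsto_nhdsGT t
  simp only [jump, rightLim_eq_of_tendsto ha, rightLim_eq_of_tendsto hb,
    rightLim_eq_of_tendsto (ha.add hb)]
  ring

lemma jump_const_mul (hg : IsTame g) (c : ℝ) :
    jump (fun s => c * g s) = fun t => c * jump g t := by
  ext t
  obtain ⟨b, hb⟩ := hg.tendsto_nhdsGT t
  simp only [jump, rightLim_eq_of_tendsto hb, rightLim_eq_of_tendsto (hb.const_mul c)]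
  ring

lemma add (hf : IsTame f) (hg : IsTame g) : IsTame fun s => f s + g s where
  tendsto_nhdsGT t := by
    obtain ⟨a, ha⟩ := hf.tendsto_nhdsGT t
    obtain ⟨b, hb⟩ := hg.tendsto_nhdsGT t
    exact ⟨a + b, ha.add hb⟩
  tendsto_atBot := by
    obtain ⟨a, ha⟩ := hf.tendsto_atBot
    obtain ⟨b, hb⟩ := hg.tendsto_atBot
    exact ⟨a + b, ha.add hb⟩
  finite_support_jump := by
    rw [jump_add hf hg]
    exact (hf.finite_support_jump.union hg.finite_support_jump).subset (support_add _ _)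

lemma const_mul (hg : IsTame g) (c : ℝ) : IsTame fun s => c * g s where
  tendsto_nhdsGT t := by
    obtain ⟨b, hb⟩ := hg.tendsto_nhdsGT t
    exact ⟨c * b, hb.const_mul c⟩
  tendsto_atBot := by
    obtain ⟨b, hb⟩ := hg.tendsto_atBot
    exact ⟨c * b, hb.const_mul c⟩
  finite_support_jump := by
    rw [jump_const_mul hg]
    exact hg.finite_support_jump.subset (support_mul_subset_right _ _)

end IsTame

lemma eulerCharOne_add {f g : ℝ → ℝ} (hf : IsTame f) (hg : IsTame g) :
    eulerCharOne (fun s => f s + g s) = eulerCharOne f + eulerCharOne g := by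
  obtain ⟨a, ha⟩ := hf.tendsto_atBot
  obtain ⟨b, hb⟩ := hg.tendsto_atBot
  simp only [eulerCharOne, hf.jump_add hg,
    finsum_add_distrib hf.finite_support_jump hg.finite_support_jump, ha.limUnder_eq,
    hb.limUnder_eq, (ha.add hb).limUnder_eq]
  ring

lemma eulerCharOne_const_mul {g : ℝ → ℝ} (hg : IsTame g) (c : ℝ) :
    eulerCharOne (fun s => c * g s) = c * eulerCharOne g := by
  obtain ⟨b, hb⟩ := hg.tendsto_atBot
  simp only [eulerCharOne, hg.jump_const_mul, ← mul_finsum, hb.limUnder_eq,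
    (hb.const_mul c).limUnder_eq]
  ring

lemma jump_const (c : ℝ) : jump (fun _ => c) = 0 := funext fun t => by
  rw [jump, rightLim_eq_of_tendsto (a := t) (tendsto_const_nhds (x := c)), sub_self, Pi.zero_apply]

lemma isTame_const (c : ℝ) : IsTame fun _ => c where
  tendsto_nhdsGT _ := ⟨c, tendsto_const_nhds⟩
  tendsto_atBot := ⟨c, tendsto_const_nhds⟩
  finite_support_jump := by simp [jump_const]

lemma eulerCharOne_const (c : ℝ) : eulerCharOne (fun _ => c) = -c := by
  simp [eulerCharOne, jump_const, tendsto_const_nhds.limUnder_eq]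

lemma IsTame.sum {ι : Type*} (s : Finset ι) (c : ι → ℝ) {g : ι → ℝ → ℝ}
    (hg : ∀ i ∈ s, IsTame (g i)) : IsTame fun t => ∑ i ∈ s, c i * g i t := by
  induction s using Finset.induction_on with
  | empty => simpa using isTame_const 0
  | insert j s hj ih =>
    simp only [Finset.sum_insert hj]
    exact ((hg j (s.mem_insert_self j)).const_mul _).add
      (ih fun i hi => hg i (Finset.mem_insert_of_mem hi))

lemma eulerCharOne_sum {ι : Type*} (s : Finset ι) (c : ι → ℝ) {g : ι → ℝ → ℝ}
    (hg : ∀ i ∈ s, IsTame (g i)) :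
    eulerCharOne (fun t => ∑ i ∈ s, c i * g i t) = ∑ i ∈ s, c i * eulerCharOne (g i) := by
  induction s using Finset.induction_on with
  | empty => simpa using eulerCharOne_const 0
  | insert j s hj ih =>
    have hs : ∀ i ∈ s, IsTame (g i) := fun i hi => hg i (Finset.mem_insert_of_mem hi)
    have hgj := hg j (s.mem_insert_self j)
    simp only [Finset.sum_insert hj]
    rw [eulerCharOne_add (hgj.const_mul _) (IsTame.sum s c hs), eulerCharOne_const_mul hgj, ih hs]

structure HasEulerCharOne (g : ℝ → ℝ) (c : ℝ) : Prop where
  isTame : IsTame g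
  eulerCharOne_eq : eulerCharOne g = c

lemma tendsto_ind_of_eventually_mem_iff {α : Type*} {l : Filter α} {S : Set α} {p : Prop}
    [Decidable p] (h : ∀ᶠ s in l, s ∈ S ↔ p) : Tendsto (ind S) l (𝓝 (if p then 1 else 0)) :=
  tendsto_const_nhds.congr' (h.mono fun _ hs => by simp only [ind_apply, hs])

lemma eventually_mem_Ici_iff (a t : ℝ) : ∀ᶠ s in 𝓝[>] t, s ∈ Ici a ↔ t ∈ Ici a := by
  rcases lt_or_ge t a with hta | hat
  · filter_upwards [nhdsWithin_le_nhds (Iio_mem_nhds hta)] with s (hs : s < a)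
    simp only [mem_Ici, not_le.2 hs, not_le.2 hta]
  · filter_upwards [self_mem_nhdsWithin] with s (hs : t < s)
    simp only [mem_Ici, hat, hat.trans hs.le]

lemma eventually_mem_Iic_iff (b t : ℝ) : ∀ᶠ s in 𝓝[>] t, s ∈ Iic b ↔ t ∈ Iio b := by
  rcases lt_or_ge t b with htb | hbt
  · filter_upwards [nhdsWithin_le_nhds (Iio_mem_nhds htb)] with s (hs : s < b)
    simp only [mem_Iic, mem_Iio, hs.le, htb]
  · filter_upwards [self_mem_nhdsWithin] with s (hs : t < s)
    simp only [mem_Iic, mem_Iio, not_le.2 (hbt.trans_lt hs), not_lt.2 hbt]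

lemma hasEulerCharOne_ind_Ici (a : ℝ) : HasEulerCharOne (ind (Ici a)) 0 := by
  have hright t := tendsto_ind_of_eventually_mem_iff (eventually_mem_Ici_iff a t)
  have hbot : Tendsto (ind (Ici a)) atBot (𝓝 0) := by
    simpa using tendsto_ind_of_eventually_mem_iff (p := False)
      ((eventually_lt_atBot a).mono fun s hs => by simpa using hs)
  have hjump : jump (ind (Ici a)) = 0 := by
    ext t
    rw [jump, rightLim_eq_of_tendsto (hright t), ind_apply]
    exact sub_self _
  refine ⟨⟨fun t => ⟨_, hright t⟩, ⟨0, hbot⟩, by simp [hjump]⟩, ?_⟩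
  simp [eulerCharOne, hjump, hbot.limUnder_eq]

lemma hasEulerCharOne_ind_Iic (b : ℝ) : HasEulerCharOne (ind (Iic b)) 0 := by
  have hright t := tendsto_ind_of_eventually_mem_iff (eventually_mem_Iic_iff b t)
  have hbot : Tendsto (ind (Iic b)) atBot (𝓝 1) := by
    simpa using tendsto_ind_of_eventually_mem_iff (p := True)
      ((eventually_le_atBot b).mono fun s hs => by simpa using hs)
  have hjump : jump (ind (Iic b)) = ind {b} := by
    ext t
    rw [jump, rightLim_eq_of_tendsto (hright t), ind_apply, ind_apply]
    rcases lt_trichotomy t b with h | rfl | h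
    · simp [h, h.le, h.ne]
    · simp
    · simp [h.ne', not_le.2 h, not_lt.2 h.le]
  refine ⟨⟨fun t => ⟨_, hright t⟩, ⟨1, hbot⟩, ?_⟩, ?_⟩
  · rw [hjump]; exact (finite_singleton b).subset fun t ht => by simpa [ind_apply] using ht
  · rw [eulerCharOne, hjump, hbot.limUnder_eq,
      finsum_eq_single _ b (fun t ht => by simp [ind_apply, ht])]
    simp [ind_apply]

lemma hasEulerCharOne_ind_upperClosure {J : Set ℝ} (hne : J.Nonempty) (hcl : IsClosed J) :
    HasEulerCharOne (ind (upperClosure J : Set ℝ)) (if BddBelow J then 0 else -1) := by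
  by_cases hJ : BddBelow J
  · rw [upperClosure_eq_Ici_csInf hne hJ hcl, if_pos hJ]
    exact hasEulerCharOne_ind_Ici _
  · have hU : (upperClosure J : Set ℝ) = univ := by
      refine eq_univ_of_forall fun t => ?_
      obtain ⟨s, hs, hst⟩ := not_bddBelow_iff.1 hJ t
      exact ⟨s, hs, hst.le⟩
    rw [hU, ind_univ, if_neg hJ]
    exact ⟨isTame_const 1, eulerCharOne_const 1⟩

lemma hasEulerCharOne_ind_lowerClosure {J : Set ℝ} (hne : J.Nonempty) (hcl : IsClosed J) :
    HasEulerCharOne (ind (lowerClosure J : Set ℝ)) (if BddAbove J then 0 else -1) := by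
  by_cases hJ : BddAbove J
  · rw [lowerClosure_eq_Iic_csSup hne hJ hcl, if_pos hJ]
    exact hasEulerCharOne_ind_Iic _
  · have hL : (lowerClosure J : Set ℝ) = univ := by
      refine eq_univ_of_forall fun t => ?_
      obtain ⟨s, hs, hst⟩ := not_bddAbove_iff.1 hJ t
      exact ⟨s, hs, hst.le⟩
    rw [hL, ind_univ, if_neg hJ]
    exact ⟨isTame_const 1, eulerCharOne_const 1⟩

/-- A nonempty closed interval is the intersection of its upper and lower closures, whose union
is `ℝ`; this reduces it to half-lines. -/
lemma hasEulerCharOne_ind_of_isClosed {J : Set ℝ} (hne : J.Nonempty) (hcl : IsClosed J)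
    (hJ : J.OrdConnected) :
    HasEulerCharOne (ind J)
      (1 - (if BddAbove J then 0 else 1) - (if BddBelow J then 0 else 1)) := by
  set U := (upperClosure J : Set ℝ)
  set L := (lowerClosure J : Set ℝ)
  have hUL : ind J = fun t => (ind U t + ind L t) + -1 := by
    ext t
    have hcover : t ∈ U ∨ t ∈ L := by
      obtain ⟨s, hs⟩ := hne
      rcases le_total s t with hst | hts
      · exact Or.inl ⟨s, hs, hst⟩
      · exact Or.inr ⟨s, hs, hts⟩
    have hmem : t ∈ J ↔ t ∈ U ∧ t ∈ L := by rw [← hJ.upperClosure_inter_lowerClosure]; rfl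
    by_cases hU : t ∈ U <;> by_cases hL : t ∈ L <;> simp only [ind_apply, hmem, hU, hL] <;>
      norm_num
    exact hcover.elim hU hL
  obtain ⟨hUt, hUχ⟩ := hasEulerCharOne_ind_upperClosure hne hcl
  obtain ⟨hLt, hLχ⟩ := hasEulerCharOne_ind_lowerClosure hne hcl
  rw [hUL]
  refine ⟨(hUt.add hLt).add (isTame_const _), ?_⟩
  rw [eulerCharOne_add (hUt.add hLt) (isTame_const _), eulerCharOne_add hUt hLt,
    eulerCharOne_const, hUχ, hLχ]
  split_ifs <;> ring

/-! ### The Euler characteristic of a cone -/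

lemma Set.neg_eq_self_of_forall_neg_mem {α : Type*} [InvolutiveNeg α] {s : Set α}
    (h : ∀ x ∈ s, -x ∈ s) : -s = s :=
  Set.Subset.antisymm (fun x hx => neg_neg x ▸ h _ hx) fun x hx => Set.mem_neg.2 (h x hx)

section EulerSign

variable {E F : Type*} [AddCommGroup E] [Module ℝ E] [AddCommGroup F] [Module ℝ F]

/-- The Euler characteristic with compact supports of a polyhedral cone, which is `(-1) ^ dim` on
linear subspaces and `0` on all other cones. -/
def eulerSign (K : Set E) : ℝ :=
  if -K = K then (-1) ^ Module.finrank ℝ (Submodule.span ℝ K) else 0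

lemma eulerSign_image {f : E →ₗ[ℝ] F} (hf : Injective f) (K : Set E) :
    eulerSign (f '' K) = eulerSign K := by
  have hsym : -(f '' K) = f '' K ↔ -K = K := by
    rw [← Set.image_neg, (Set.image_injective.2 hf).eq_iff]
  have hrank : Module.finrank ℝ (Submodule.span ℝ (f '' K)) =
      Module.finrank ℝ (Submodule.span ℝ K) := by
    rw [Submodule.span_image]
    exact (Submodule.equivMapOfInjective f hf _).finrank_eq.symm
  simp only [eulerSign, hsym, hrank]

lemma PointedCone.coe_span_of_neg_eq {K : PointedCone ℝ E} (h : -(K : Set E) = K) :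
    (Submodule.span ℝ (K : Set E) : Set E) = K := by
  have hlin : (K.lineal : Set E) = K :=
    Set.ext fun x => ⟨fun hx => (PointedCone.mem_lineal.1 hx).1,
      fun hx => PointedCone.mem_lineal.2 ⟨hx, by rw [← h] at hx; simpa using hx⟩⟩
  rw [← hlin, Submodule.span_eq]

lemma PointedCone.neg_eq_of_neg_inter_ker_eq {K : PointedCone ℝ E} {ℓ : E →ₗ[ℝ] ℝ}
    (hsym : -((K : Set E) ∩ ℓ.ker) = (K : Set E) ∩ ℓ.ker)
    (hup : ∃ k ∈ K, 0 < ℓ k) (hdown : ∃ k ∈ K, ℓ k < 0) : -(K : Set E) = K := by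
  -- push `w` into the hyperplane along a direction `k` of the cone, negate there, and come back
  have key : ∀ {w k : E} {c : ℝ}, w ∈ K → k ∈ K → 0 ≤ c → ℓ (w + c • k) = 0 → -w ∈ K := by
    intro w k c hw hk hc hℓ
    have hmem : -(w + c • k) ∈ K := by
      have : w + c • k ∈ (K : Set E) ∩ ℓ.ker := ⟨K.add_mem hw (K.smul_mem hc hk), hℓ⟩
      rw [← hsym] at this
      exact this.1
    simpa using K.add_mem hmem (K.smul_mem hc hk)
  refine Set.neg_eq_self_of_forall_neg_mem fun w hw => ?_
  rcases le_or_gt 0 (ℓ w) with hw0 | hw0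
  · obtain ⟨k, hk, hk0⟩ := hdown
    refine key hw hk (div_nonneg hw0 (neg_nonneg.2 hk0.le)) ?_
    rw [map_add, map_smul, smul_eq_mul, div_neg, neg_mul, div_mul_cancel₀ _ hk0.ne, add_neg_cancel]
  · obtain ⟨k, hk, hk0⟩ := hup
    refine key hw hk (div_nonneg (neg_nonneg.2 hw0.le) hk0.le) ?_
    rw [map_add, map_smul, smul_eq_mul, div_mul_cancel₀ _ hk0.ne', add_neg_cancel]

variable [FiniteDimensional ℝ E]

lemma PointedCone.finrank_span_eq_finrank_span_inter_ker_add_one {K : PointedCone ℝ E}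
    (hK : -(K : Set E) = K) {ℓ : E →ₗ[ℝ] ℝ} {k : E} (hk : k ∈ K) (hℓk : ℓ k ≠ 0) :
    Module.finrank ℝ (Submodule.span ℝ (K : Set E)) =
      Module.finrank ℝ (Submodule.span ℝ ((K : Set E) ∩ ℓ.ker)) + 1 := by
  set S := Submodule.span ℝ (K : Set E)
  have hS : (S : Set E) = K := PointedCone.coe_span_of_neg_eq hK
  have hinter : Submodule.span ℝ ((K : Set E) ∩ ℓ.ker) = S ⊓ ℓ.ker := by
    rw [← hS, ← Submodule.coe_inf, Submodule.span_eq]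
  have hne : ℓ ∘ₗ S.subtype ≠ 0 := fun h0 => hℓk <| by
    simpa using LinearMap.congr_fun h0 ⟨k, by rw [← SetLike.mem_coe, hS]; exact hk⟩
  rw [hinter, ← Submodule.map_comap_subtype, Submodule.finrank_map_subtype_eq,
    ← LinearMap.ker_comp, Module.Dual.finrank_ker_add_one_of_ne_zero hne]

theorem eulerSign_eq_eulerSign_inter_ker_mul (K : PointedCone ℝ E) (ℓ : E →ₗ[ℝ] ℝ) :
    eulerSign (K : Set E) = eulerSign ((K : Set E) ∩ ℓ.ker) *
      (1 - (if ∃ k ∈ K, 0 < ℓ k then 1 else 0) - (if ∃ k ∈ K, ℓ k < 0 then 1 else 0)) := by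
  have hneg : ∀ {k}, k ∈ K → -(K : Set E) = K → -k ∈ K := fun hk hK => by
    rw [← SetLike.mem_coe, ← hK]; simpa using hk
  by_cases hup : ∃ k ∈ K, 0 < ℓ k <;> by_cases hdown : ∃ k ∈ K, ℓ k < 0
  · rw [if_pos hup, if_pos hdown]
    by_cases hK : -(K : Set E) = K
    · obtain ⟨k, hk, hk0⟩ := hup
      have hKker : -((K : Set E) ∩ ℓ.ker) = (K : Set E) ∩ ℓ.ker := by
        rw [Set.inter_neg, hK, Set.neg_eq_self_of_forall_neg_mem fun x hx => ℓ.ker.neg_mem hx]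
      rw [eulerSign, eulerSign, if_pos hK, if_pos hKker,
        K.finrank_span_eq_finrank_span_inter_ker_add_one hK hk hk0.ne', pow_succ]
      ring
    · have hKker : -((K : Set E) ∩ ℓ.ker) ≠ (K : Set E) ∩ ℓ.ker := fun h =>
        hK (PointedCone.neg_eq_of_neg_inter_ker_eq h hup hdown)
      rw [eulerSign, eulerSign, if_neg hK, if_neg hKker]
      ring
  · have hK : -(K : Set E) ≠ K := fun hK => hdown <| by
      obtain ⟨k, hk, hk0⟩ := hup
      exact ⟨-k, hneg hk hK, by simpa using hk0⟩
    rw [eulerSign, if_neg hK, if_pos hup, if_neg hdown]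
    ring
  · have hK : -(K : Set E) ≠ K := fun hK => hup <| by
      obtain ⟨k, hk, hk0⟩ := hdown
      exact ⟨-k, hneg hk hK, by simpa using hk0⟩
    rw [eulerSign, if_neg hK, if_neg hup, if_pos hdown]
    ring
  · have hker : (K : Set E) ∩ ℓ.ker = K := Set.inter_eq_left.2 fun k hk => by
      push Not at hup hdown
      exact le_antisymm (hup k hk) (hdown k hk)
    rw [hker, if_neg hup, if_neg hdown]
    ring

end EulerSign

def consZero (n : ℕ) : (Fin n → ℝ) →ₗ[ℝ] (Fin (n + 1) → ℝ) :=
  (Fin.consLinearEquiv ℝ fun _ => ℝ).toLinearMap ∘ₗ LinearMap.inr ℝ ℝ (Fin n → ℝ)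

lemma consZero_apply {n : ℕ} (v : Fin n → ℝ) : consZero n v = Fin.cons 0 v := rfl

theorem eulerSign_eq_eulerSign_preimage_consZero_mul {n : ℕ}
    (K : PointedCone ℝ (Fin (n + 1) → ℝ)) :
    eulerSign (K : Set (Fin (n + 1) → ℝ)) = eulerSign (consZero n ⁻¹' K) *
      (1 - (if ∃ k ∈ K, 0 < k 0 then 1 else 0) - (if ∃ k ∈ K, k 0 < 0 then 1 else 0)) := by
  have hrange : range (consZero n) = (LinearMap.proj 0 : (Fin (n + 1) → ℝ) →ₗ[ℝ] ℝ).ker := by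
    ext x
    refine ⟨fun ⟨v, hv⟩ => by rw [← hv]; rfl, fun hx => ⟨Fin.tail x, ?_⟩⟩
    have hx0 : x 0 = 0 := hx
    rw [consZero_apply, ← hx0, Fin.cons_self_tail]
  rw [← eulerSign_image (f := consZero n) (Fin.cons_right_injective (α := fun _ => ℝ) 0),
    Set.image_preimage_eq_inter_range, hrange]
  exact eulerSign_eq_eulerSign_inter_ker_mul K (LinearMap.proj 0)

/-! ### Fourier–Motzkin elimination -/

lemma exists_between_of_finite {α : Type*} [ConditionallyCompleteLinearOrder α] {A B : Set α}
    (hA : A.Finite) (hB : B.Finite) (h : ∀ a ∈ A, ∀ b ∈ B, a ≤ b) :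
    ∃ t, (∀ a ∈ A, a ≤ t) ∧ ∀ b ∈ B, t ≤ b := by
  by_cases hAne : A.Nonempty
  · exact ⟨sSup A, fun a ha => le_csSup hA.bddAbove ha,
      fun b hb => csSup_le hAne fun a ha => h a ha b hb⟩
  · exact ⟨sInf B, fun a ha => (hAne ⟨a, ha⟩).elim, fun b hb => csInf_le hB.bddBelow hb⟩

lemma dotProduct_snoc {n : ℕ} (y : Fin (n + 1) → ℝ) (x : Fin n → ℝ) (t : ℝ) :
    y ⬝ᵥ Fin.snoc x t = Fin.init y ⬝ᵥ x + y (Fin.last n) * t := by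
  simp [dotProduct, Fin.sum_univ_castSucc, Fin.init]

lemma dotProduct_finCons {n : ℕ} (y : Fin (n + 1) → ℝ) (x : Fin n → ℝ) (t : ℝ) :
    y ⬝ᵥ Fin.cons t x = y 0 * t + Fin.tail y ⬝ᵥ x :=
  dotProduct_cons y t x

/-- A row `(y, c)` encodes the affine inequality `c ≤ y ⬝ᵥ x`. -/
abbrev Row (n : ℕ) := (Fin n → ℝ) × ℝ

def rowPolyhedron {n : ℕ} (L : List (Row n)) : Set (Fin n → ℝ) :=
  {x | ∀ p ∈ L, p.2 ≤ p.1 ⬝ᵥ x}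

lemma mem_rowPolyhedron {n : ℕ} {L : List (Row n)} {x : Fin n → ℝ} :
    x ∈ rowPolyhedron L ↔ ∀ p ∈ L, p.2 ≤ p.1 ⬝ᵥ x := Iff.rfl

/-- Eliminates the last variable between a row with positive and a row with negative last
coefficient. -/
def combineRows {n : ℕ} (p q : Row (n + 1)) : Row n :=
  (p.1 (Fin.last n) • Fin.init q.1 - q.1 (Fin.last n) • Fin.init p.1,
    p.1 (Fin.last n) * q.2 - q.1 (Fin.last n) * p.2)

/-- One step of Fourier–Motzkin elimination. -/
def eliminateLast {n : ℕ} (L : List (Row (n + 1))) : List (Row n) :=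
  (L.filter fun p => p.1 (Fin.last n) = 0).map (fun p => (Fin.init p.1, p.2)) ++
    (L.filter fun p => 0 < p.1 (Fin.last n)).flatMap fun p =>
      (L.filter fun q => q.1 (Fin.last n) < 0).map (combineRows p)

lemma combineRows_le_iff {n : ℕ} (p q : Row (n + 1)) (x : Fin n → ℝ) :
    (combineRows p q).2 ≤ (combineRows p q).1 ⬝ᵥ x ↔
      q.1 (Fin.last n) * (Fin.init p.1 ⬝ᵥ x - p.2) ≤
        p.1 (Fin.last n) * (Fin.init q.1 ⬝ᵥ x - q.2) := by
  simp only [combineRows, sub_dotProduct, smul_dotProduct, smul_eq_mul]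
  constructor <;> intro h <;> linarith

theorem mem_rowPolyhedron_eliminateLast {n : ℕ} {L : List (Row (n + 1))} {x : Fin n → ℝ} :
    x ∈ rowPolyhedron (eliminateLast L) ↔ ∃ t, Fin.snoc x t ∈ rowPolyhedron L := by
  have hpos {p} : p ∈ L.filter (fun p => 0 < p.1 (Fin.last n)) ↔
      p ∈ L ∧ 0 < p.1 (Fin.last n) := by simp
  have hneg {p} : p ∈ L.filter (fun p => p.1 (Fin.last n) < 0) ↔
      p ∈ L ∧ p.1 (Fin.last n) < 0 := by simp
  have hzero {p} : p ∈ L.filter (fun p => p.1 (Fin.last n) = 0) ↔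
      p ∈ L ∧ p.1 (Fin.last n) = 0 := by simp
  constructor
  · intro hx
    set bound : Row (n + 1) → ℝ := fun p => (p.2 - Fin.init p.1 ⬝ᵥ x) / p.1 (Fin.last n)
    have hbound : ∀ a ∈ bound '' {p | p ∈ L.filter fun p => 0 < p.1 (Fin.last n)},
        ∀ b ∈ bound '' {p | p ∈ L.filter fun p => p.1 (Fin.last n) < 0}, a ≤ b := by
      rintro _ ⟨p, hp, rfl⟩ _ ⟨q, hq, rfl⟩
      have hpq := hx _ (List.mem_append_right _
        (List.mem_flatMap.2 ⟨p, hp, List.mem_map.2 ⟨q, hq, rfl⟩⟩))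
      rw [combineRows_le_iff] at hpq
      replace hp := hpos.1 hp
      replace hq := hneg.1 hq
      rw [div_le_iff₀ hp.2, div_mul_eq_mul_div, le_div_iff_of_neg hq.2]
      linarith
    obtain ⟨t, hlow, hup⟩ := exists_between_of_finite
      ((L.filter fun p => 0 < p.1 (Fin.last n)).finite_toSet.image bound)
      ((L.filter fun p => p.1 (Fin.last n) < 0).finite_toSet.image bound) hbound
    refine ⟨t, fun p hp => ?_⟩
    rw [dotProduct_snoc]
    rcases lt_trichotomy (p.1 (Fin.last n)) 0 with hn | hz | hp'
    · have := hup _ ⟨p, hneg.2 ⟨hp, hn⟩, rfl⟩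
      rw [le_div_iff_of_neg hn] at this
      linarith
    · have := hx _ (List.mem_append_left _ (List.mem_map.2 ⟨p, hzero.2 ⟨hp, hz⟩, rfl⟩))
      simpa [hz] using this
    · have := hlow _ ⟨p, hpos.2 ⟨hp, hp'⟩, rfl⟩
      rw [div_le_iff₀ hp'] at this
      linarith
  · rintro ⟨t, ht⟩ r hr
    rcases List.mem_append.1 hr with hr | hr
    · obtain ⟨p, hp, rfl⟩ := List.mem_map.1 hr
      rw [hzero] at hp
      simpa [dotProduct_snoc, hp.2] using ht p hp.1
    · obtain ⟨p, hp, hr⟩ := List.mem_flatMap.1 hr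
      obtain ⟨q, hq, rfl⟩ := List.mem_map.1 hr
      rw [hpos] at hp
      rw [hneg] at hq
      have h1 := ht p hp.1
      have h2 := ht q hq.1
      rw [dotProduct_snoc] at h1 h2
      rw [combineRows_le_iff]
      nlinarith [hp.2, hq.2]

def homogenize {n : ℕ} (L : List (Row n)) : List (Row n) := L.map fun p => (p.1, 0)

lemma eliminateLast_homogenize {n : ℕ} (L : List (Row (n + 1))) :
    eliminateLast (homogenize L) = homogenize (eliminateLast L) := by
  simp only [eliminateLast, homogenize, List.filter_map, List.map_append, List.map_map,
    List.map_flatMap, List.flatMap_map]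
  congr 1
  exact List.flatMap_congr fun p _ =>
    List.map_congr_left fun q _ => by simp [combineRows]

/-- Fourier–Motzkin elimination of all variables but the first. -/
def projectFirst : {n : ℕ} → List (Row (n + 1)) → List (Row 1)
  | 0, L => L
  | _ + 1, L => projectFirst (eliminateLast L)

theorem mem_rowPolyhedron_projectFirst {n : ℕ} {L : List (Row (n + 1))} {t : ℝ} :
    (fun _ => t) ∈ rowPolyhedron (projectFirst L) ↔ ∃ x ∈ rowPolyhedron L, x 0 = t := by
  induction n with
  | zero =>
    refine ⟨fun h => ⟨_, h, rfl⟩, ?_⟩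
    rintro ⟨x, hx, rfl⟩
    have hx0 : (fun _ => x 0) = x := funext fun i => by rw [Fin.fin_one_eq_zero i]
    rwa [projectFirst, hx0]
  | succ m ih =>
    rw [projectFirst, ih]
    constructor
    · rintro ⟨x, hx, rfl⟩
      obtain ⟨s, hs⟩ := mem_rowPolyhedron_eliminateLast.1 hx
      refine ⟨Fin.snoc x s, hs, ?_⟩
      rw [← Fin.castSucc_zero, Fin.snoc_castSucc]
    · rintro ⟨X, hX, rfl⟩
      refine ⟨Fin.init X, mem_rowPolyhedron_eliminateLast.2 ⟨X (Fin.last _), ?_⟩, rfl⟩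
      rwa [Fin.snoc_init_self]

lemma projectFirst_homogenize {n : ℕ} (L : List (Row (n + 1))) :
    projectFirst (homogenize L) = homogenize (projectFirst L) := by
  induction n with
  | zero => rfl
  | succ m ih => rw [projectFirst, projectFirst, eliminateLast_homogenize, ih]

def recessionCone {n : ℕ} (L : List (Row n)) : PointedCone ℝ (Fin n → ℝ) where
  carrier := {x | ∀ p ∈ L, 0 ≤ p.1 ⬝ᵥ x}
  add_mem' hx hy p hp := by rw [dotProduct_add]; exact add_nonneg (hx p hp) (hy p hp)
  zero_mem' p _ := by simp
  smul_mem' c x hx p hp := by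
    rw [Nonneg.mk_smul, dotProduct_smul, smul_eq_mul]
    exact mul_nonneg c.2 (hx p hp)

lemma mem_recessionCone {n : ℕ} {L : List (Row n)} {x : Fin n → ℝ} :
    x ∈ recessionCone L ↔ ∀ p ∈ L, 0 ≤ p.1 ⬝ᵥ x := Iff.rfl

lemma coe_recessionCone {n : ℕ} (L : List (Row n)) :
    (recessionCone L : Set (Fin n → ℝ)) = rowPolyhedron (homogenize L) := by
  ext x
  rw [SetLike.mem_coe, mem_recessionCone, mem_rowPolyhedron, homogenize, List.forall_mem_map]

lemma add_smul_mem_rowPolyhedron {n : ℕ} {L : List (Row n)} {x k : Fin n → ℝ}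
    (hx : x ∈ rowPolyhedron L) (hk : k ∈ recessionCone L) {c : ℝ} (hc : 0 ≤ c) :
    x + c • k ∈ rowPolyhedron L := fun p hp => by
  rw [dotProduct_add, dotProduct_smul, smul_eq_mul]
  nlinarith [hx p hp, hk p hp]

def firstCoords {n : ℕ} (L : List (Row (n + 1))) : Set ℝ := (fun x => x 0) '' rowPolyhedron L

lemma firstCoords_eq {n : ℕ} (L : List (Row (n + 1))) :
    firstCoords L = {t | ∀ p ∈ projectFirst L, p.2 ≤ p.1 0 * t} := by
  ext t
  rw [firstCoords, Set.mem_image, ← mem_rowPolyhedron_projectFirst]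
  simp [rowPolyhedron, dotProduct]

lemma isClosed_firstCoords {n : ℕ} (L : List (Row (n + 1))) : IsClosed (firstCoords L) := by
  have h : firstCoords L = ⋂ p ∈ projectFirst L, {t | p.2 ≤ p.1 0 * t} := by
    rw [firstCoords_eq]; ext; simp
  rw [h]
  exact isClosed_biInter fun p _ =>
    isClosed_le continuous_const (continuous_const.mul continuous_id)

lemma ordConnected_firstCoords {n : ℕ} (L : List (Row (n + 1))) :
    (firstCoords L).OrdConnected := by
  rw [firstCoords_eq]
  refine ⟨fun t₁ h₁ t₂ h₂ t ht p hp => ?_⟩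
  rcases le_total 0 (p.1 0) with ha | ha
  · nlinarith [h₁ p hp, ht.1]
  · nlinarith [h₂ p hp, ht.2]

lemma not_bddAbove_firstCoords {n : ℕ} {L : List (Row (n + 1))}
    (hne : (rowPolyhedron L).Nonempty) {k : Fin (n + 1) → ℝ} (hk : k ∈ recessionCone L)
    (hk0 : 0 < k 0) :
    ¬BddAbove (firstCoords L) := by
  obtain ⟨x, hx⟩ := hne
  rintro ⟨b, hb⟩
  have hc : 0 ≤ (|b - x 0| + 1) / k 0 := by positivity
  have := hb ⟨_, add_smul_mem_rowPolyhedron hx hk hc, rfl⟩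
  simp only [Pi.add_apply, Pi.smul_apply, smul_eq_mul, div_mul_cancel₀ _ hk0.ne'] at this
  linarith [le_abs_self (b - x 0)]

lemma not_bddBelow_firstCoords {n : ℕ} {L : List (Row (n + 1))}
    (hne : (rowPolyhedron L).Nonempty) {k : Fin (n + 1) → ℝ} (hk : k ∈ recessionCone L)
    (hk0 : k 0 < 0) :
    ¬BddBelow (firstCoords L) := by
  obtain ⟨x, hx⟩ := hne
  rintro ⟨b, hb⟩
  have hc : 0 ≤ (|b - x 0| + 1) / -k 0 := div_nonneg (by positivity) (by linarith)
  have := hb ⟨_, add_smul_mem_rowPolyhedron hx hk hc, rfl⟩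
  have hck : (|b - x 0| + 1) / -k 0 * k 0 = -(|b - x 0| + 1) := by
    rw [div_neg, neg_mul, div_mul_cancel₀ _ hk0.ne]
  simp only [Pi.add_apply, Pi.smul_apply, smul_eq_mul, hck] at this
  linarith [neg_abs_le (b - x 0)]

/-- If every constraint on the first coordinate is a lower bound, Fourier–Motzkin applied to the
homogenized system produces a recession direction going up. -/
lemma exists_mem_recessionCone_of_not_bddAbove {n : ℕ} {L : List (Row (n + 1))}
    (h : ¬BddAbove (firstCoords L)) : ∃ k ∈ recessionCone L, 0 < k 0 := by
  by_cases hall : ∀ p ∈ projectFirst L, 0 ≤ p.1 0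
  · have h1 : (fun _ => (1 : ℝ)) ∈ rowPolyhedron (projectFirst (homogenize L)) := by
      rw [projectFirst_homogenize]
      exact List.forall_mem_map.2 fun p hp => by simpa [dotProduct] using hall p hp
    obtain ⟨k, hk, hk0⟩ := mem_rowPolyhedron_projectFirst.1 h1
    exact ⟨k, by rwa [← SetLike.mem_coe, coe_recessionCone], by rw [hk0]; exact one_pos⟩
  · push Not at hall
    obtain ⟨p, hp, hp0⟩ := hall
    refine absurd ⟨p.2 / p.1 0, fun t ht => ?_⟩ h
    rw [firstCoords_eq] at ht
    rw [le_div_iff_of_neg hp0]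
    linarith [ht p hp]

lemma exists_mem_recessionCone_of_not_bddBelow {n : ℕ} {L : List (Row (n + 1))}
    (h : ¬BddBelow (firstCoords L)) : ∃ k ∈ recessionCone L, k 0 < 0 := by
  by_cases hall : ∀ p ∈ projectFirst L, p.1 0 ≤ 0
  · have h1 : (fun _ => (-1 : ℝ)) ∈ rowPolyhedron (projectFirst (homogenize L)) := by
      rw [projectFirst_homogenize]
      exact List.forall_mem_map.2 fun p hp => by simpa [dotProduct] using hall p hp
    obtain ⟨k, hk, hk0⟩ := mem_rowPolyhedron_projectFirst.1 h1
    exact ⟨k, by rwa [← SetLike.mem_coe, coe_recessionCone],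
      by rw [hk0]; exact neg_one_lt_zero⟩
  · push Not at hall
    obtain ⟨p, hp, hp0⟩ := hall
    refine absurd ⟨p.2 / p.1 0, fun t ht => ?_⟩ h
    rw [firstCoords_eq] at ht
    rw [div_le_iff₀ hp0]
    linarith [ht p hp]

/-! ### The Euler characteristic in coordinates -/

/-- The Euler characteristic with compact supports on `ℝⁿ`, iterating `eulerCharOne` over the
first coordinate. -/
def eulerChar : (n : ℕ) → ((Fin n → ℝ) → ℝ) → ℝ
  | 0, f => f 0
  | n + 1, f => eulerCharOne fun t => eulerChar n fun x => f (Fin.cons t x)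

lemma eulerChar_const_zero : ∀ n : ℕ, eulerChar n (fun _ => 0) = 0
  | 0 => rfl
  | n + 1 => by simp only [eulerChar, eulerChar_const_zero n, eulerCharOne_const, neg_zero]

def sliceRows {n : ℕ} (L : List (Row (n + 1))) (t : ℝ) : List (Row n) :=
  L.map fun p => (Fin.tail p.1, p.2 - p.1 0 * t)

lemma mem_rowPolyhedron_sliceRows {n : ℕ} {L : List (Row (n + 1))} {t : ℝ} {x : Fin n → ℝ} :
    x ∈ rowPolyhedron (sliceRows L t) ↔ Fin.cons t x ∈ rowPolyhedron L := by
  simp only [mem_rowPolyhedron, sliceRows, List.forall_mem_map, dotProduct_finCons,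
    sub_le_iff_le_add, add_comm]

lemma nonempty_sliceRows_iff {n : ℕ} {L : List (Row (n + 1))} {t : ℝ} :
    (rowPolyhedron (sliceRows L t)).Nonempty ↔ t ∈ firstCoords L := by
  constructor
  · rintro ⟨x, hx⟩
    exact ⟨_, mem_rowPolyhedron_sliceRows.1 hx, rfl⟩
  · rintro ⟨x, hx, rfl⟩
    exact ⟨Fin.tail x, mem_rowPolyhedron_sliceRows.2 (by rwa [Fin.cons_self_tail])⟩

lemma coe_recessionCone_sliceRows {n : ℕ} (L : List (Row (n + 1))) (t : ℝ) :
    (recessionCone (sliceRows L t) : Set (Fin n → ℝ)) = consZero n ⁻¹' recessionCone L := by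
  ext v
  rw [SetLike.mem_coe, mem_recessionCone, sliceRows, List.forall_mem_map, Set.mem_preimage,
    SetLike.mem_coe, mem_recessionCone]
  simp [consZero_apply, dotProduct_finCons]

lemma hasEulerCharOne_ind_firstCoords {n : ℕ} (L : List (Row (n + 1))) :
    HasEulerCharOne (ind (firstCoords L))
      (if (rowPolyhedron L).Nonempty then
        1 - (if ∃ k ∈ recessionCone L, 0 < k 0 then 1 else 0) -
          (if ∃ k ∈ recessionCone L, k 0 < 0 then 1 else 0)
      else 0) := by
  by_cases hne : (rowPolyhedron L).Nonempty
  · have habove : BddAbove (firstCoords L) ↔ ¬∃ k ∈ recessionCone L, 0 < k 0 :=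
      ⟨fun h ⟨k, hk, hk0⟩ => not_bddAbove_firstCoords hne hk hk0 h,
        not_imp_comm.1 exists_mem_recessionCone_of_not_bddAbove⟩
    have hbelow : BddBelow (firstCoords L) ↔ ¬∃ k ∈ recessionCone L, k 0 < 0 :=
      ⟨fun h ⟨k, hk, hk0⟩ => not_bddBelow_firstCoords hne hk hk0 h,
        not_imp_comm.1 exists_mem_recessionCone_of_not_bddBelow⟩
    have hJ : (firstCoords L).Nonempty := hne.image _
    have hχ := hasEulerCharOne_ind_of_isClosed hJ (isClosed_firstCoords L)
      (ordConnected_firstCoords L)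
    refine ⟨hχ.isTame, ?_⟩
    rw [hχ.eulerCharOne_eq, if_pos hne]
    simp only [habove, hbelow, ite_not]
  · have hind : ind (firstCoords L) = fun _ => 0 := by
      ext; simp [ind_apply, firstCoords, Set.not_nonempty_iff_eq_empty.1 hne]
    rw [if_neg hne, hind]
    exact ⟨isTame_const 0, by rw [eulerCharOne_const, neg_zero]⟩

/-- The recession cone of a slice does not depend on the height of the slice. -/
lemma ite_nonempty_sliceRows_eulerSign {n : ℕ} (L : List (Row (n + 1))) (t : ℝ) :
    (if (rowPolyhedron (sliceRows L t)).Nonempty then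
        eulerSign (recessionCone (sliceRows L t) : Set (Fin n → ℝ)) else 0) =
      eulerSign (consZero n ⁻¹' recessionCone L) * ind (firstCoords L) t := by
  rw [coe_recessionCone_sliceRows, ind_apply, ← nonempty_sliceRows_iff (t := t)]
  split_ifs <;> ring

theorem eulerChar_sum_mul_ind (n : ℕ) {ι : Type*} (s : Finset ι) (a : ι → ℝ)
    (L : ι → List (Row n)) :
    eulerChar n (fun x => ∑ i ∈ s, a i * ind (rowPolyhedron (L i)) x) =
      ∑ i ∈ s, a i * if (rowPolyhedron (L i)).Nonempty then
        eulerSign (recessionCone (L i) : Set (Fin n → ℝ)) else 0 := by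
  induction n generalizing ι with
  | zero =>
    refine Finset.sum_congr rfl fun i _ => ?_
    have hsub : ∀ x : Fin 0 → ℝ, x = 0 := fun x => Subsingleton.elim _ _
    have hK : eulerSign (recessionCone (L i) : Set (Fin 0 → ℝ)) = 1 := by
      rw [eulerSign, if_pos (Set.neg_eq_self_of_forall_neg_mem fun x hx => by
        rwa [hsub (-x), ← hsub x]), Module.finrank_zero_of_subsingleton, pow_zero]
    have hne : (rowPolyhedron (L i)).Nonempty ↔ (0 : Fin 0 → ℝ) ∈ rowPolyhedron (L i) :=
      ⟨fun ⟨x, hx⟩ => hsub x ▸ hx, fun h => ⟨0, h⟩⟩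
    simp only [ind_apply, hne, hK]
  | succ n ih =>
    set R : ι → ℝ := fun i => eulerSign (consZero n ⁻¹' recessionCone (L i))
    have hslice t : eulerChar n (fun x => ∑ i ∈ s, a i * ind (rowPolyhedron (L i)) (Fin.cons t x)) =
        ∑ i ∈ s, (a i * R i) * ind (firstCoords (L i)) t := by
      simp_rw [← ind_congr mem_rowPolyhedron_sliceRows, ih, ite_nonempty_sliceRows_eulerSign,
        mul_assoc]
      rfl
    have htame i (_ : i ∈ s) := (hasEulerCharOne_ind_firstCoords (L i)).isTame
    simp only [eulerChar, hslice, eulerCharOne_sum s _ htame]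
    refine Finset.sum_congr rfl fun i _ => ?_
    rw [(hasEulerCharOne_ind_firstCoords (L i)).eulerCharOne_eq,
      eulerSign_eq_eulerSign_preimage_consZero_mul (recessionCone (L i))]
    split_ifs <;> ring

/-! ### Polyhedral cones and their tangent cones -/

lemma mem_intrinsicInterior_iff_eventually {E : Type*} [AddCommGroup E] [Module ℝ E]
    [TopologicalSpace E] {s : Set E} {x : E} :
    x ∈ intrinsicInterior ℝ s ↔ x ∈ s ∧ ∀ᶠ z in 𝓝 x, z ∈ affineSpan ℝ s → z ∈ s := by
  rw [mem_intrinsicInterior]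
  constructor
  · rintro ⟨y, hy, rfl⟩
    refine ⟨interior_subset (s := Subtype.val ⁻¹' s) hy, ?_⟩
    obtain ⟨u, hu, hus⟩ := (mem_nhds_subtype _ _ _).1 (mem_interior_iff_mem_nhds.1 hy)
    filter_upwards [hu] with z hz hzA using hus (show (⟨z, hzA⟩ : affineSpan ℝ s) ∈ _ from hz)
  · rintro ⟨hx, hev⟩
    refine ⟨⟨x, subset_affineSpan ℝ s hx⟩, ?_, rfl⟩
    rw [mem_interior_iff_mem_nhds, mem_nhds_subtype]
    exact ⟨_, hev, fun z hz => hz z.2⟩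

section PolyCone

variable {E : Type*} [NormedAddCommGroup E] [InnerProductSpace ℝ E]

def polyCone (S : Finset E) : Set E := ⋂ y ∈ S, {v : E | 0 ≤ ⟪v, y⟫}

lemma isPolyCone_iff {C : Set E} : IsPolyCone C ↔ ∃ S, C = polyCone S := Iff.rfl

lemma mem_polyCone {S : Finset E} {v : E} : v ∈ polyCone S ↔ ∀ y ∈ S, 0 ≤ ⟪v, y⟫ := by
  simp [polyCone]

lemma zero_mem_polyCone (S : Finset E) : (0 : E) ∈ polyCone S :=
  mem_polyCone.2 fun y _ => by rw [inner_zero_left]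

lemma isClosed_polyCone (S : Finset E) : IsClosed (polyCone S) :=
  isClosed_biInter fun _ _ => isClosed_le continuous_const (continuous_id.inner continuous_const)

lemma coe_affineSpan_polyCone (S : Finset E) :
    (affineSpan ℝ (polyCone S) : Set E) = Submodule.span ℝ (polyCone S) := by
  rw [← affineSpan_insert_zero, Set.insert_eq_of_mem (zero_mem_polyCone S)]

/-- The tangent cone of `polyCone S` at a point `x` of it. -/
def localCone (S : Finset E) (x : E) : Set E := {v | ∀ y ∈ S, ⟪x, y⟫ = 0 → 0 ≤ ⟪v, y⟫}

lemma localCone_eq_polyCone (S : Finset E) (x : E) :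
    localCone S x = polyCone (S.filter fun y => ⟪x, y⟫ = 0) := by
  ext v
  simp [localCone, mem_polyCone, and_imp]

lemma polyCone_subset_localCone (S : Finset E) (x : E) : polyCone S ⊆ localCone S x :=
  fun _ hv y hy _ => mem_polyCone.1 hv y hy

lemma tendsto_add_smul_nhdsGT (x v : E) : Tendsto (fun ε : ℝ => x + ε • v) (𝓝[>] 0) (𝓝 x) := by
  have : Tendsto (fun ε : ℝ => x + ε • v) (𝓝 0) (𝓝 (x + (0 : ℝ) • v)) :=
    tendsto_const_nhds.add (tendsto_id.smul_const v)
  simpa using tendsto_nhdsWithin_of_tendsto_nhds this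

lemma eventually_add_smul_mem_polyCone_iff {S : Finset E} {x : E} (hx : x ∈ polyCone S) (v : E) :
    ∀ᶠ ε in 𝓝[>] (0 : ℝ), x + ε • v ∈ polyCone S ↔ v ∈ localCone S x := by
  have hinactive : ∀ᶠ ε in 𝓝[>] (0 : ℝ), ∀ y ∈ S, ⟪x, y⟫ ≠ 0 → 0 < ⟪x + ε • v, y⟫ := by
    refine (eventually_all_finset S).2 fun y hy => ?_
    by_cases hxy : ⟪x, y⟫ = 0
    · exact Eventually.of_forall fun _ h => (h hxy).elim
    · have hpos : 0 < ⟪x, y⟫ := lt_of_le_of_ne (mem_polyCone.1 hx y hy) (Ne.symm hxy)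
      exact ((tendsto_add_smul_nhdsGT x v).inner tendsto_const_nhds).eventually_const_lt hpos
        |>.mono fun _ h _ => h
  filter_upwards [hinactive, self_mem_nhdsWithin] with ε hε (hε0 : 0 < ε)
  simp only [mem_polyCone, localCone, Set.mem_ofPred_eq]
  refine forall₂_congr fun y hy => ?_
  by_cases hxy : ⟪x, y⟫ = 0
  · rw [inner_add_left, hxy, real_inner_smul_left, zero_add]
    simp [mul_nonneg_iff_of_pos_left hε0]
  · simp [hxy, (hε y hy hxy).le]

lemma eventually_add_smul_not_mem_polyCone {S : Finset E} {x : E} (hx : x ∉ polyCone S) (v : E) :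
    ∀ᶠ ε in 𝓝[>] (0 : ℝ), x + ε • v ∉ polyCone S :=
  tendsto_add_smul_nhdsGT x v ((isClosed_polyCone S).isOpen_compl.mem_nhds hx)

lemma eventually_ind_polyCone_add_smul (S : Finset E) (x v : E) :
    ∀ᶠ ε in 𝓝[>] (0 : ℝ),
      ind (polyCone S) (x + ε • v) = ind (polyCone S) x * ind (localCone S x) v := by
  by_cases hx : x ∈ polyCone S
  · filter_upwards [eventually_add_smul_mem_polyCone_iff hx v] with ε hε
    simp [ind_apply, hx, hε]
  · filter_upwards [eventually_add_smul_not_mem_polyCone hx v] with ε hε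
    simp [ind_apply, hx, hε]

lemma inner_eq_zero_of_mem_span {s : Set E} {y : E} (h : ∀ z ∈ s, ⟪z, y⟫ = 0) {w : E}
    (hw : w ∈ Submodule.span ℝ s) : ⟪w, y⟫ = 0 := by
  induction hw using Submodule.span_induction with
  | mem z hz => exact h z hz
  | zero => exact inner_zero_left _
  | add a b _ _ ha hb => rw [inner_add_left, ha, hb, add_zero]
  | smul c a _ ha => rw [real_inner_smul_left, ha, mul_zero]

theorem mem_intrinsicInterior_polyCone {S : Finset E} {x : E} :
    x ∈ intrinsicInterior ℝ (polyCone S) ↔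
      x ∈ polyCone S ∧ ∀ y ∈ S, ⟪x, y⟫ = 0 → ∀ z ∈ polyCone S, ⟪z, y⟫ = 0 := by
  simp only [mem_intrinsicInterior_iff_eventually, ← SetLike.mem_coe, coe_affineSpan_polyCone]
  refine and_congr_right fun hx => ⟨fun hev y hy hxy z hz => ?_, fun h => ?_⟩
  · by_contra hzy
    have hpos : 0 < ⟪z, y⟫ := lt_of_le_of_ne (mem_polyCone.1 hz y hy) (Ne.symm hzy)
    obtain ⟨ε, hmem, hε⟩ :=
      ((tendsto_add_smul_nhdsGT x (-z)).eventually hev |>.and self_mem_nhdsWithin).exists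
    have hspan : x + ε • -z ∈ Submodule.span ℝ (polyCone S) :=
      add_mem (Submodule.subset_span hx)
        (Submodule.smul_mem _ _ (neg_mem (Submodule.subset_span hz)))
    have := mem_polyCone.1 (hmem hspan) y hy
    rw [inner_add_left, hxy, real_inner_smul_left, inner_neg_left, zero_add] at this
    nlinarith [show (0 : ℝ) < ε from hε]
  · have hinactive : ∀ᶠ w in 𝓝 x, ∀ y ∈ S, ⟪x, y⟫ ≠ 0 → 0 < ⟪w, y⟫ := by
      refine (eventually_all_finset S).2 fun y hy => ?_
      by_cases hxy : ⟪x, y⟫ = 0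
      · exact Eventually.of_forall fun _ h => (h hxy).elim
      · have hpos : 0 < ⟪x, y⟫ := lt_of_le_of_ne (mem_polyCone.1 hx y hy) (Ne.symm hxy)
        exact (tendsto_id.inner tendsto_const_nhds).eventually_const_lt hpos |>.mono fun _ h _ => h
    filter_upwards [hinactive] with w hw hwspan
    refine mem_polyCone.2 fun y hy => ?_
    by_cases hxy : ⟪x, y⟫ = 0
    · exact (inner_eq_zero_of_mem_span (h y hy hxy) hwspan).ge
    · exact (hw y hy hxy).le

lemma localCone_subset_span {S : Finset E} {x : E} (hx : x ∈ polyCone S) :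
    localCone S x ⊆ Submodule.span ℝ (polyCone S) := fun v hv => by
  obtain ⟨ε, hmem, hε⟩ :=
    ((eventually_add_smul_mem_polyCone_iff hx v).and self_mem_nhdsWithin).exists
  have hεv : ε • v ∈ Submodule.span ℝ (polyCone S) := by
    simpa using sub_mem (Submodule.subset_span (hmem.2 hv)) (Submodule.subset_span hx)
  exact (Submodule.smul_mem_iff _ (ne_of_gt hε)).1 hεv

lemma span_localCone {S : Finset E} {x : E} (hx : x ∈ polyCone S) :
    Submodule.span ℝ (localCone S x) = Submodule.span ℝ (polyCone S) :=
  le_antisymm (Submodule.span_le.2 (localCone_subset_span hx))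
    (Submodule.span_mono (polyCone_subset_localCone S x))

lemma neg_localCone_eq_iff {S : Finset E} {x : E} (hx : x ∈ polyCone S) :
    -localCone S x = localCone S x ↔
      ∀ y ∈ S, ⟪x, y⟫ = 0 → ∀ z ∈ polyCone S, ⟪z, y⟫ = 0 := by
  refine ⟨fun hsym y hy hxy z hz => ?_,
    fun h => Set.neg_eq_self_of_forall_neg_mem fun v hv y hy hxy => ?_⟩
  · have hnz : -z ∈ localCone S x := by
      rw [← hsym]; simpa using polyCone_subset_localCone S x hz
    have := hnz y hy hxy
    rw [inner_neg_left] at this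
    exact le_antisymm (by linarith) (mem_polyCone.1 hz y hy)
  · rw [inner_neg_left, inner_eq_zero_of_mem_span (h y hy hxy) (localCone_subset_span hx hv),
      neg_zero]

theorem sign_mul_ind_intrinsicInterior_eq_eulerSign {S : Finset E} {x : E} (hx : x ∈ polyCone S) :
    (-1) ^ sdim (polyCone S) * ind (intrinsicInterior ℝ (polyCone S)) x =
      eulerSign (localCone S x) := by
  rw [eulerSign, span_localCone hx]
  simp only [neg_localCone_eq_iff hx, ind_apply,
    mem_intrinsicInterior_polyCone, sdim, hx, true_and]
  split_ifs <;> simp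

lemma mem_polyCone_union_neg {S t : Finset E} {x : E} (hx : x ∈ polyCone S) (ht : t ⊆ S) :
    x ∈ polyCone (S ∪ t.image Neg.neg) ↔ ∀ y ∈ t, ⟪x, y⟫ = 0 := by
  simp only [mem_polyCone, Finset.mem_union, Finset.mem_image]
  constructor
  · intro h y hy
    have := h (-y) (Or.inr ⟨y, hy, rfl⟩)
    rw [inner_neg_right] at this
    exact le_antisymm (by linarith) (mem_polyCone.1 hx y (ht hy))
  · rintro h y (hy | ⟨y, hy, rfl⟩)
    · exact mem_polyCone.1 hx y hy
    · rw [inner_neg_right, h y hy, neg_zero]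

/-- Inclusion–exclusion over the constraints that are not implicit equalities of the cone. -/
theorem ind_intrinsicInterior_polyCone (S : Finset E) :
    ind (intrinsicInterior ℝ (polyCone S)) =
      ∑ t ∈ (S.filter fun y => ∃ z ∈ polyCone S, ⟪z, y⟫ ≠ 0).powerset,
        (-1 : ℝ) ^ t.card • ind (polyCone (S ∪ t.image Neg.neg)) := by
  set S₁ := S.filter fun y => ∃ z ∈ polyCone S, ⟪z, y⟫ ≠ 0
  have hS₁ : S₁ ⊆ S := Finset.filter_subset _ _
  ext x
  simp only [Finset.sum_apply, Pi.smul_apply, smul_eq_mul]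
  by_cases hx : x ∈ polyCone S
  · have hrel : x ∈ intrinsicInterior ℝ (polyCone S) ↔ ∀ y ∈ S₁, ¬⟪x, y⟫ = 0 := by
      simp only [mem_intrinsicInterior_polyCone, hx, true_and, S₁, Finset.mem_filter]
      exact ⟨fun h y hy hxy => hy.2.elim fun z hz => hz.2 (h y hy.1 hxy z hz.1),
        fun h y hy hxy z hz => by_contra fun hzy => h y ⟨hy, z, hz, hzy⟩ hxy⟩
    calc ind (intrinsicInterior ℝ (polyCone S)) x
        = ∏ y ∈ S₁, (1 - if ⟪x, y⟫ = 0 then 1 else 0) := by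
          rw [ind_apply, hrel]
          convert (Finset.prod_boole (p := fun y => ¬⟪x, y⟫ = 0)).symm using 2 with y
          split_ifs <;> simp_all
      _ = ∑ t ∈ S₁.powerset, (-1) ^ t.card * ∏ y ∈ t, if ⟪x, y⟫ = 0 then 1 else 0 := by
          simp [Finset.prod_sub]
      _ = _ := Finset.sum_congr rfl fun t ht => by
          simp only [Finset.prod_boole, ind_apply,
            mem_polyCone_union_neg hx ((Finset.mem_powerset.1 ht).trans hS₁)]
  · have hsub : ∀ t : Finset E, polyCone (S ∪ t.image Neg.neg) ⊆ polyCone S := fun t v hv =>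
      mem_polyCone.2 fun y hy => mem_polyCone.1 hv y (Finset.mem_union_left _ hy)
    rw [ind_apply, if_neg fun h => hx (intrinsicInterior_subset h)]
    exact (Finset.sum_eq_zero fun t _ => by
      rw [ind_apply, if_neg fun h => hx (hsub t h), mul_zero]).symm

lemma ind_intrinsicInterior_mem_span {C : Set E} (hC : IsPolyCone C) :
    ind (intrinsicInterior ℝ C) ∈
      Submodule.span ℝ {f : E → ℝ | ∃ C : Set E, IsPolyCone C ∧ f = ind C} := by
  obtain ⟨S, rfl⟩ := isPolyCone_iff.1 hC
  rw [ind_intrinsicInterior_polyCone]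
  exact Submodule.sum_mem _ fun t _ =>
    Submodule.smul_mem _ _ (Submodule.subset_span ⟨_, ⟨_, rfl⟩, rfl⟩)

end PolyCone

/-! ### The valuation -/

section Coordinates

variable {E : Type*} [NormedAddCommGroup E] [InnerProductSpace ℝ E]

lemma inner_basis_equivFun_symm {n : ℕ} (b : Module.Basis (Fin n) ℝ E) (w : Fin n → ℝ) (y : E) :
    ⟪b.equivFun.symm w, y⟫ = (fun k => ⟪b k, y⟫) ⬝ᵥ w := by
  simp [Module.Basis.equivFun_symm_apply, sum_inner, real_inner_smul_left, dotProduct, mul_comm]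

def polyConeRows {n : ℕ} (b : Module.Basis (Fin n) ℝ E) (S : Finset E) : List (Row n) :=
  S.toList.map fun y => (fun k => ⟪b k, y⟫, 0)

lemma rowPolyhedron_polyConeRows {n : ℕ} (b : Module.Basis (Fin n) ℝ E) (S : Finset E) :
    rowPolyhedron (polyConeRows b S) = b.equivFun.symm ⁻¹' polyCone S := by
  ext w
  simp only [mem_rowPolyhedron, polyConeRows, List.forall_mem_map, Finset.mem_toList,
    Set.mem_preimage, mem_polyCone, inner_basis_equivFun_symm]

lemma coe_recessionCone_polyConeRows {n : ℕ} (b : Module.Basis (Fin n) ℝ E) (S : Finset E) :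
    (recessionCone (polyConeRows b S) : Set (Fin n → ℝ)) = rowPolyhedron (polyConeRows b S) := by
  rw [coe_recessionCone, homogenize, polyConeRows, List.map_map]
  rfl

end Coordinates

theorem sum_mul_eulerSign_polyCone_eq_zero {ι : Type*} (s : Finset ι) (a : ι → ℝ)
    (S : ι → Finset V) (hrel : ∀ v, ∑ i ∈ s, a i * ind (polyCone (S i)) v = 0) :
    ∑ i ∈ s, a i * eulerSign (polyCone (S i)) = 0 := by
  set e := (Module.finBasis ℝ V).equivFun
  have key := eulerChar_sum_mul_ind _ s a fun i => polyConeRows (Module.finBasis ℝ V) (S i)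
  simp only [rowPolyhedron_polyConeRows, coe_recessionCone_polyConeRows] at key
  have hzero : (fun x => ∑ i ∈ s, a i * ind (e.symm ⁻¹' polyCone (S i)) x) = fun _ => 0 :=
    funext fun x => hrel (e.symm x)
  rw [hzero, eulerChar_const_zero] at key
  rw [key]
  refine Finset.sum_congr rfl fun i _ => ?_
  rw [if_pos ⟨0, by simpa using zero_mem_polyCone (S i)⟩, ← e.image_eq_preimage_symm]
  exact congrArg _ (eulerSign_image (f := e.toLinearMap) e.injective _).symm

theorem sum_mul_sign_ind_intrinsicInterior_eq_zero {ι : Type*} (s : Finset ι) (a : ι → ℝ)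
    (S : ι → Finset V) (hrel : ∀ v, ∑ i ∈ s, a i * ind (polyCone (S i)) v = 0) (x : V) :
    ∑ i ∈ s, a i * ((-1) ^ sdim (polyCone (S i)) * ind (intrinsicInterior ℝ (polyCone (S i))) x) =
      0 := by
  have hlocal v : ∑ i ∈ s, (a i * ind (polyCone (S i)) x) *
      ind (polyCone ((S i).filter fun y => ⟪x, y⟫ = 0)) v = 0 := by
    obtain ⟨ε, hε⟩ := ((eventually_all_finset s).2 fun i _ =>
      eventually_ind_polyCone_add_smul (S i) x v).exists
    refine Eq.trans (Finset.sum_congr rfl fun i hi => ?_) (hrel (x + ε • v))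
    rw [hε i hi, localCone_eq_polyCone, mul_assoc]
  refine Eq.trans (Finset.sum_congr rfl fun i _ => ?_)
    (sum_mul_eulerSign_polyCone_eq_zero s _ _ hlocal)
  by_cases hx : x ∈ polyCone (S i)
  · rw [← localCone_eq_polyCone, ← sign_mul_ind_intrinsicInterior_eq_eulerSign hx,
      ind_apply (polyCone _) x, if_pos hx]
    ring
  · rw [ind_apply (polyCone _) x, if_neg hx, ind_apply,
      if_neg fun h => hx (intrinsicInterior_subset h)]
    ring

theorem exists_linearMap_span_eq {R M W ι : Type*} [CommRing R] [AddCommGroup M] [Module R M]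
    [AddCommGroup W] [Module R W] {S : Set M} (v : ι → M) (hv : Set.range v = S) (w : ι → W)
    (h : ∀ l : ι →₀ R, Finsupp.linearCombination R v l = 0 → Finsupp.linearCombination R w l = 0) :
    ∃ ψ : Submodule.span R S →ₗ[R] W, ∀ i (hi : v i ∈ Submodule.span R S), ψ ⟨v i, hi⟩ = w i := by
  subst hv
  set π := Finsupp.linearCombination R v
  have hker : LinearMap.ker π ≤ LinearMap.ker (Finsupp.linearCombination R w) := fun l hl => h l hl
  refine ⟨(LinearMap.ker π).liftQ _ hker ∘ₗ π.quotKerEquivRange.symm.toLinearMap ∘ₗ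
    (LinearEquiv.ofEq _ _ (Finsupp.range_linearCombination R)).symm.toLinearMap, fun i hi => ?_⟩
  have hvi : (LinearEquiv.ofEq _ _ (Finsupp.range_linearCombination R)).symm ⟨v i, hi⟩ =
      ⟨π (Finsupp.single i 1), LinearMap.mem_range_self π _⟩ :=
    Subtype.ext (by simp [π])
  simp only [LinearMap.coe_comp, LinearEquiv.coe_coe, Function.comp_apply, hvi,
    LinearMap.quotKerEquivRange_symm_apply_image, Submodule.mkQ_apply, Submodule.liftQ_apply,
    Finsupp.linearCombination_single, one_smul]

theorem sum_smul_sign_smul_ind_intrinsicInterior_eq_zero (l : {C : Set V // IsPolyCone C} →₀ ℝ)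
    (hl : Finsupp.linearCombination ℝ (fun C => ind C.1) l = 0) :
    ∑ C ∈ l.support, l C • ((-1 : ℝ) ^ sdim C.1 • ind (intrinsicInterior ℝ C.1)) = 0 := by
  choose S hS using fun C : {C : Set V // IsPolyCone C} => isPolyCone_iff.1 C.2
  have hrel v : ∑ C ∈ l.support, l C * ind (polyCone (S C)) v = 0 := by
    simpa [Finsupp.linearCombination_apply, Finsupp.sum, hS] using congrFun hl v
  funext x
  simpa [hS] using sum_mul_sign_ind_intrinsicInterior_eq_zero _ _ S hrel x

theorem stmt18 {W : Type*} [AddCommGroup W] [Module ℝ W]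
    (φ : (Submodule.span ℝ {f : V → ℝ | ∃ C : Set V, IsPolyCone C ∧ f = ind C}) →ₗ[ℝ] W) :
    ∃ ψ : (Submodule.span ℝ {f : V → ℝ | ∃ C : Set V, IsPolyCone C ∧ f = ind C}) →ₗ[ℝ] W,
      ∀ (C : Set V) (hC : IsPolyCone C)
        (h : ind (intrinsicInterior ℝ C) ∈ Submodule.span ℝ {f : V → ℝ | ∃ C : Set V, IsPolyCone C ∧ f = ind C}),
        ψ ⟨ind C, Submodule.subset_span ⟨C, hC, rfl⟩⟩ =
          ((-1 : ℝ) ^ sdim C) • φ ⟨ind (intrinsicInterior ℝ C), h⟩ := by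
  have hrange : Set.range (fun C : {C : Set V // IsPolyCone C} => ind C.1) =
      {f : V → ℝ | ∃ C : Set V, IsPolyCone C ∧ f = ind C} := by
    ext f
    exact ⟨fun ⟨C, hC⟩ => ⟨C.1, C.2, hC.symm⟩, fun ⟨C, hC, hf⟩ => ⟨⟨C, hC⟩, hf.symm⟩⟩
  let relint (C : {C : Set V // IsPolyCone C}) :
      Submodule.span ℝ {f : V → ℝ | ∃ C : Set V, IsPolyCone C ∧ f = ind C} :=
    ⟨ind (intrinsicInterior ℝ C.1), ind_intrinsicInterior_mem_span C.2⟩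
  obtain ⟨ψ, hψ⟩ := exists_linearMap_span_eq _ hrange
    (fun C => ((-1 : ℝ) ^ sdim C.1) • φ (relint C)) fun l hl => by
      have hsum : ∑ C ∈ l.support, l C • ((-1 : ℝ) ^ sdim C.1) • relint C = 0 :=
        Subtype.ext <| by
          rw [Submodule.coe_sum, Submodule.coe_zero]
          exact sum_smul_sign_smul_ind_intrinsicInterior_eq_zero l hl
      simp only [Finsupp.linearCombination_apply, Finsupp.sum, ← map_smul, ← map_sum, hsum,
        map_zero]
  exact ⟨ψ, fun C hC _ => hψ ⟨C, hC⟩ _⟩
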